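/- arXiv:0710.0716 — 3 statements merged into one kernel-verified Lean document; each statement's English description precedes it below -/
import Mathlib

section
/- The measure μ on (0,1)³ × {0,1} with density (6/π²) · 𝟙{0<A<1} · 𝟙{0<B<1−A} · 𝟙{0<Q<1/(2−A−B)} · 1/(1−A) with respect to dA dB dQ times counting measure on N ∈ {0,1} is a probability measure, i.e. 2 · (6/π²) · ∫₀¹ ∫₀^{1−A} ∫₀^{1/(2−A−B)} dQ dB dA / (1−A) = 1. -/
/-!
After the `Q`- and `B`-integrations and the substitution `u = 1 - A`, the integral becomes
`∫₀¹ log (1 + u) / u du`. Integrating the power series of `log (1 + u) / u` term by term gives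
`∑ (-1)ⁿ / (n + 1)² = ζ(2) / 2 = π² / 12`, and `2 · (6 / π²) · π² / 12 = 1`.
-/

open Real MeasureTheory Set

theorem hasSum_one_div_succ_sq : HasSum (fun n : ℕ => 1 / ((n : ℝ) + 1) ^ 2) (π ^ 2 / 6) := by
  simpa using (hasSum_nat_add_iff' 1).mpr hasSum_zeta_two

theorem hasSum_neg_one_pow_div_succ_sq :
    HasSum (fun n : ℕ => (-1) ^ n / ((n : ℝ) + 1) ^ 2) (π ^ 2 / 12) := by
  -- `c` vanishes at even indices and is `2 / (2k + 2)² = (1/2) / (k + 1)²` at odd ones.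
  set c : ℕ → ℝ := fun n => 1 / ((n : ℝ) + 1) ^ 2 - (-1) ^ n / ((n : ℝ) + 1) ^ 2
  have h_even : HasSum (fun k => c (2 * k)) 0 :=
    hasSum_zero.congr_fun fun k => by simp [c, pow_mul]
  have h_odd : HasSum (fun k => c (2 * k + 1)) (1 / 2 * (π ^ 2 / 6)) :=
    (hasSum_one_div_succ_sq.mul_left _).congr_fun fun k => by
      simp only [c, pow_succ, pow_mul]
      push_cast
      field_simp
      ring
  have := hasSum_one_div_succ_sq.sub (h_even.even_add_odd h_odd)
  rw [show π ^ 2 / 6 - (0 + 1 / 2 * (π ^ 2 / 6)) = π ^ 2 / 12 by ring] at this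
  exact this.congr_fun fun n => by simp [c]

theorem hasSum_log_one_add_div_self {u : ℝ} (hu : |u| < 1) (hu₀ : u ≠ 0) :
    HasSum (fun n : ℕ => (-1) ^ n / ((n : ℝ) + 1) * u ^ n) (log (1 + u) / u) := by
  have := (hasSum_pow_div_log_of_abs_lt_one (x := -u) (by rwa [abs_neg])).mul_left (-u⁻¹)
  rw [sub_neg_eq_add, neg_mul_neg, ← div_eq_inv_mul] at this
  refine this.congr_fun fun n => ?_
  rw [pow_succ, neg_pow u]
  field_simp

theorem integral_one_div_sub {a b : ℝ} (ha : 0 < a) (hb : b < a) :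
    ∫ x in (0 : ℝ)..b, 1 / (a - x) = log (a / (a - b)) := by
  rw [intervalIntegral.integral_comp_sub_left (fun x => 1 / x), sub_zero, integral_one_div]
  rw [mem_uIcc]
  rintro (⟨h, -⟩ | ⟨h, -⟩) <;> linarith

theorem integral_log_one_add_div_self : ∫ u in (0 : ℝ)..1, log (1 + u) / u = π ^ 2 / 12 := by
  set F : ℕ → ℝ → ℝ := fun n u => (-1) ^ n / ((n : ℝ) + 1) * u ^ n
  have integral_pow_Ioo (n : ℕ) : ∫ u in Ioo (0 : ℝ) 1, u ^ n = 1 / (n + 1) := by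
    rw [← integral_Ioc_eq_integral_Ioo, ← intervalIntegral.integral_of_le zero_le_one, integral_pow]
    simp
  have integrable_F (n : ℕ) : Integrable (F n) (volume.restrict (Ioo 0 1)) :=
    (Continuous.integrableOn_Icc (by fun_prop)).mono_set Ioo_subset_Icc_self
  have integral_F (n : ℕ) : ∫ u in Ioo 0 1, F n u = (-1) ^ n / ((n : ℝ) + 1) ^ 2 := by
    rw [integral_const_mul, integral_pow_Ioo]
    field_simp
  have integral_norm_F (n : ℕ) : ∫ u in Ioo 0 1, ‖F n u‖ = 1 / ((n : ℝ) + 1) ^ 2 := by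
    rw [setIntegral_congr_fun measurableSet_Ioo (g := fun u => 1 / ((n : ℝ) + 1) * u ^ n),
      integral_const_mul, integral_pow_Ioo]
    · rw [sq, one_div_mul_one_div]
    · intro u hu
      simp [F, abs_of_pos hu.1, abs_of_pos (Nat.cast_add_one_pos (α := ℝ) n)]
  have h := hasSum_integral_of_summable_integral_norm integrable_F
    (by simpa only [integral_norm_F] using hasSum_one_div_succ_sq.summable)
  rw [intervalIntegral.integral_of_le zero_le_one, integral_Ioc_eq_integral_Ioo,
    setIntegral_congr_fun measurableSet_Ioo fun u hu =>
      (hasSum_log_one_add_div_self (abs_lt.2 ⟨by linarith [hu.1], hu.2⟩) hu.1.ne').tsum_eq.symm]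
  exact (h.congr_fun fun n => (integral_F n).symm).unique hasSum_neg_one_pow_div_succ_sq

/-- The measure `μ` on `(0,1)³ × {0,1}` with density
`(6/π²)·𝟙{0<A<1}·𝟙{0<B<1−A}·𝟙{0<Q<1/(2−A−B)}/(1−A)` w.r.t. `dA dB dQ` times counting
measure on `N ∈ {0,1}` is a probability measure, i.e.
`2·(6/π²)·∫₀¹ (∫₀^{1−A} ∫₀^{1/(2−A−B)} dQ dB)/(1−A) dA = 1`. -/
theorem mu_is_probability :
    2 * (6 / Real.pi ^ 2) *
      ∫ A in (0:ℝ)..1,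
        (∫ B in (0:ℝ)..(1 - A), ∫ _Q in (0:ℝ)..(1 / (2 - A - B)), (1:ℝ)) / (1 - A) = 1 := by
  have inner_integral {A : ℝ} (hA : A < 2) :
      ∫ B in (0:ℝ)..(1 - A), ∫ _Q in (0:ℝ)..(1 / (2 - A - B)), (1:ℝ) = log (1 + (1 - A)) := by
    simp only [intervalIntegral.integral_const, sub_zero, smul_eq_mul, mul_one]
    rw [integral_one_div_sub (by linarith) (by linarith)]
    congr 1
    ring
  rw [intervalIntegral.integral_congr (g := fun A => log (1 + (1 - A)) / (1 - A)) fun A hA => by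
      rw [uIcc_of_le zero_le_one] at hA
      rw [inner_integral (by linarith [hA.2])],
    intervalIntegral.integral_comp_sub_left (fun u => log (1 + u) / u), sub_self, sub_zero,
    integral_log_one_add_div_self]
  field_simp
  norm_num
end

section
/- For every h' ∈ [−1,1] and every (A,B,Q) with 0 < A < 1, 0 < B < 1−A, 0 < Q < 1/(2−A−B), and N ∈ {0,1}, one has 𝐓_{A,B,Q,1−N}(−h') = (s, −h), where (s,h) = 𝐓_{A,B,Q,N}(h'). -/
open Set

/-- The three-branch limiting transfer map `𝐓_{A,B,Q,N}` of the periodic Lorentz gas,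
for impact parameters `h' ∈ [−1,1]`, with `Q' = (1 − Q(1−B))/(1−A)`. -/
noncomputable def transferMap (A B Q : ℝ) (N : ℕ) (h' : ℝ) : ℝ × ℝ :=
  if (-1:ℝ)^N * h' > 1 - 2*A then
    (Q, h' - 2*(-1:ℝ)^N*(1 - A))
  else if (-1:ℝ)^N * h' < -1 + 2*B then
    ((1 - Q*(1 - B))/(1 - A), h' + 2*(-1:ℝ)^N*(1 - B))
  else
    ((1 - Q*(1 - B))/(1 - A) + Q, h' + 2*(-1:ℝ)^N*(A - B))

/-- Symmetry of the transfer map: `𝐓_{A,B,Q,1−N}(−h') = (s, −h)` where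
`(s,h) = 𝐓_{A,B,Q,N}(h')`. -/
theorem transferMap_symm (A B Q : ℝ) (N : ℕ) (hA : A ∈ Set.Ioo (0:ℝ) 1)
    (hB : B ∈ Set.Ioo (0:ℝ) (1 - A)) (hQ : Q ∈ Set.Ioo (0:ℝ) (1/(2 - A - B)))
    (hN : N ≤ 1) (h' : ℝ) (hh' : h' ∈ Set.Icc (-1:ℝ) 1) :
    transferMap A B Q (1 - N) (-h') =
      ((transferMap A B Q N h').1, -(transferMap A B Q N h').2) := by
  interval_cases N <;>
    simp only [transferMap, show (1:ℕ)-0=1 from rfl, show (1:ℕ)-1=0 from rfl,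
      pow_zero, pow_one, one_mul, neg_mul, neg_neg] <;>
    split_ifs <;> first | (exfalso; linarith) | (refine Prod.ext ?_ ?_ <;> simp <;> ring)
end

section
/- Let μ be the probability measure on K = (0,1)³ × {0,1} with density (6/π²)·𝟙{0<B<1−A}·𝟙{0<Q<1/(2−A−B)}/(1−A), and for h' ∈ (−1,1) let P(s,h|h') ds dh be the pushforward of μ under (A,B,Q,N) ↦ 𝐓_{A,B,Q,N}(h'). Then the mean free time ∫₀^∞ ∫_{−1}^1 s · P(s,h|h') ds dh is finite for every h' ∈ (−1,1). -/
open Set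

open MeasureTheory

/-- The limiting parameter measure `μ` on `K = (0,1)³ × {0,1}` (`{0,1}` encoded as `Bool`),
with density `(6/π²)·𝟙{0<A<1}·𝟙{0<B<1−A}·𝟙{0<Q<1/(2−A−B)}/(1−A)` with respect to
`dA dB dQ` times counting measure on `N`. -/
noncomputable def lorentzMu : Measure ((ℝ × ℝ × ℝ) × Bool) :=
  ((volume : Measure (ℝ × ℝ × ℝ)).withDensity fun p =>
    ENNReal.ofReal
      (if 0 < p.1 ∧ p.1 < 1 ∧ 0 < p.2.1 ∧ p.2.1 < 1 - p.1 ∧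
          0 < p.2.2 ∧ p.2.2 < 1/(2 - p.1 - p.2.1) then
        (6 / Real.pi ^ 2) / (1 - p.1) else 0)).prod (Measure.count : Measure Bool)

/-- The transition probability `P(·,·|h')`: the pushforward of `μ` under
`(A,B,Q,N) ↦ 𝐓_{A,B,Q,N}(h')`. -/
noncomputable def transitionProb (h' : ℝ) : Measure (ℝ × ℝ) :=
  lorentzMu.map fun p => transferMap p.1.1 p.1.2.1 p.1.2.2 p.2.toNat h'

/-- The `s`-component of the transfer map is bounded on the support of the density. -/
lemma transfer_fst_le (h' : ℝ) (hh' : h' ∈ Set.Ioo (-1:ℝ) 1)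
    (A B Q : ℝ) (b : Bool)
    (h : 0 < A ∧ A < 1 ∧ 0 < B ∧ B < 1 - A ∧ 0 < Q ∧ Q < 1/(2 - A - B)) :
    (transferMap A B Q b.toNat h').1 ≤ 1 + 2/(1 - |h'|) := by
  obtain ⟨hA0, hA1, hB0, hB1, hQ0, hQ1⟩ := h
  have ha1 : |h'| < 1 := abs_lt.mpr ⟨hh'.1, hh'.2⟩
  have ha0 : (0:ℝ) < 1 - |h'| := by linarith
  have hden : (1:ℝ) < 2 - A - B := by linarith
  have h1A : (0:ℝ) < 1 - A := by linarith
  have h1B : (0:ℝ) < 1 - B := by linarith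
  have hQ1' : Q ≤ 1 := by
    have : 1/(2 - A - B) ≤ 1 := by
      rw [div_le_one (by linarith)]; linarith
    linarith
  have hCpos : (0:ℝ) ≤ 2/(1 - |h'|) := by positivity
  have ht : -|h'| ≤ (-1:ℝ)^(b.toNat) * h' := by
    cases b
    · simpa using neg_abs_le h'
    · simpa using le_abs_self h'
  have hQ'le : ∀ (_ : (1:ℝ) - |h'| ≤ 2*(1 - A)), (1 - Q*(1 - B))/(1 - A) ≤ 2/(1 - |h'|) := by
    intro hkey
    have h1 : (1 - Q*(1 - B))/(1 - A) ≤ 1/(1 - A) := by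
      gcongr
      nlinarith
    have h2 : 1/(1 - A) ≤ 2/(1 - |h'|) := by
      rw [div_le_div_iff₀ h1A ha0]; linarith
    linarith
  rw [transferMap]
  split_ifs with h1 h2
  · dsimp only; linarith
  · dsimp only
    have hkey : (1:ℝ) - |h'| ≤ 2*(1 - A) := by linarith
    have := hQ'le hkey
    linarith
  · dsimp only
    push_neg at h1
    have hkey : (1:ℝ) - |h'| ≤ 2*(1 - A) := by linarith
    have := hQ'le hkey
    linarith

lemma meas_transfer (h' : ℝ) (n : ℕ) :
    Measurable fun x : ℝ × ℝ × ℝ => transferMap x.1 x.2.1 x.2.2 n h' := by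
  unfold transferMap
  apply Measurable.ite (measurableSet_lt (by fun_prop) measurable_const)
  · exact ((measurable_snd.comp measurable_snd).prod (by fun_prop))
  apply Measurable.ite (measurableSet_lt measurable_const (by fun_prop))
  · exact Measurable.prod (by fun_prop) (by fun_prop)
  · exact Measurable.prod (by fun_prop) (by fun_prop)

lemma meas_f (h' : ℝ) :
    Measurable fun p : (ℝ × ℝ × ℝ) × Bool =>
      transferMap p.1.1 p.1.2.1 p.1.2.2 p.2.toNat h' := by
  have : (fun p : (ℝ × ℝ × ℝ) × Bool =>
      transferMap p.1.1 p.1.2.1 p.1.2.2 p.2.toNat h')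
      = fun p => if p.2 = false then transferMap p.1.1 p.1.2.1 p.1.2.2 0 h'
        else transferMap p.1.1 p.1.2.1 p.1.2.2 1 h' := by
    funext p; cases p.2 <;> simp_all
  rw [this]
  exact Measurable.ite (measurable_snd (MeasurableSet.singleton false))
    ((meas_transfer h' 0).comp measurable_fst)
    ((meas_transfer h' 1).comp measurable_fst)

lemma meas_dens : Measurable fun p : ℝ × ℝ × ℝ =>
    ENNReal.ofReal
      (if 0 < p.1 ∧ p.1 < 1 ∧ 0 < p.2.1 ∧ p.2.1 < 1 - p.1 ∧
          0 < p.2.2 ∧ p.2.2 < 1/(2 - p.1 - p.2.1) then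
        (6 / Real.pi ^ 2) / (1 - p.1) else 0) := by
  apply Measurable.ennreal_ofReal
  apply Measurable.ite _ (by fun_prop) measurable_const
  apply MeasurableSet.inter (measurableSet_lt measurable_const measurable_fst)
  apply MeasurableSet.inter (measurableSet_lt measurable_fst measurable_const)
  apply MeasurableSet.inter (measurableSet_lt measurable_const (measurable_fst.comp measurable_snd))
  apply MeasurableSet.inter (measurableSet_lt (measurable_fst.comp measurable_snd) (by fun_prop))
  apply MeasurableSet.inter (measurableSet_lt measurable_const (measurable_snd.comp measurable_snd))
  exact measurableSet_lt (measurable_snd.comp measurable_snd) (by fun_prop)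

lemma dens_lintegral_le (c : ℝ) (hc : 0 ≤ c) :
    ∫⁻ p : ℝ × ℝ × ℝ, ENNReal.ofReal
      (if 0 < p.1 ∧ p.1 < 1 ∧ 0 < p.2.1 ∧ p.2.1 < 1 - p.1 ∧
          0 < p.2.2 ∧ p.2.2 < 1/(2 - p.1 - p.2.1) then
        c / (1 - p.1) else 0) ≤ ENNReal.ofReal c := by
  have hG : ∫⁻ p : ℝ × ℝ × ℝ,
      ((Ioo (0:ℝ) 1).indicator (fun A => ENNReal.ofReal (c / (1 - A))) p.1 *
        ((Ioo (0:ℝ) (1 - p.1)).indicator 1 p.2.1 * (Ioo (0:ℝ) 1).indicator 1 p.2.2))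
      = ENNReal.ofReal c := by
    rw [Measure.volume_eq_prod, lintegral_prod]
    · have inner : ∀ A : ℝ, ∫⁻ y : ℝ × ℝ,
          ((Ioo (0:ℝ) 1).indicator (fun A => ENNReal.ofReal (c / (1 - A))) A *
            ((Ioo (0:ℝ) (1 - A)).indicator 1 y.1 * (Ioo (0:ℝ) 1).indicator 1 y.2))
          = (Ioo (0:ℝ) 1).indicator (fun A => ENNReal.ofReal (c / (1 - A))) A *
            ENNReal.ofReal (1 - A) := by
        intro A
        rw [lintegral_const_mul]
        · rw [Measure.volume_eq_prod, lintegral_prod_mul]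
          · simp [lintegral_indicator_one measurableSet_Ioo, Real.volume_Ioo]
          · exact (measurable_indicator_const_iff 1 |>.mpr measurableSet_Ioo).aemeasurable
          · exact (measurable_indicator_const_iff 1 |>.mpr measurableSet_Ioo).aemeasurable
        · exact Measurable.mul
            ((measurable_indicator_const_iff 1 |>.mpr measurableSet_Ioo).comp measurable_fst)
            ((measurable_indicator_const_iff 1 |>.mpr measurableSet_Ioo).comp measurable_snd)
      simp only [inner]
      have eq2 : ∀ A : ℝ,
          (Ioo (0:ℝ) 1).indicator (fun A => ENNReal.ofReal (c / (1 - A))) A *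
            ENNReal.ofReal (1 - A)
          = (Ioo (0:ℝ) 1).indicator (fun _ => ENNReal.ofReal c) A := by
        intro A
        by_cases hA : A ∈ Ioo (0:ℝ) 1
        · have h1A : (0:ℝ) < 1 - A := by linarith [hA.2]
          rw [indicator_of_mem hA, indicator_of_mem hA,
            ← ENNReal.ofReal_mul (div_nonneg hc h1A.le), div_mul_cancel₀]
          exact h1A.ne'
        · simp [indicator_of_notMem hA]
      simp only [eq2]
      rw [lintegral_indicator_const measurableSet_Ioo, Real.volume_Ioo]
      simp
    · apply Measurable.aemeasurable
      apply Measurable.mul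
      · exact (Measurable.indicator (by fun_prop) measurableSet_Ioo).comp measurable_fst
      apply Measurable.mul
      · have : (fun p : ℝ × ℝ × ℝ => (Ioo (0:ℝ) (1 - p.1)).indicator (1 : ℝ → ENNReal) p.2.1)
            = fun p : ℝ × ℝ × ℝ => if 0 < p.2.1 ∧ p.2.1 < 1 - p.1 then 1 else 0 := by
          funext p; simp [indicator, mem_Ioo]
        rw [this]
        refine Measurable.ite ?_ measurable_const measurable_const
        exact MeasurableSet.inter
          (measurableSet_lt measurable_const (measurable_fst.comp measurable_snd))
          (measurableSet_lt (measurable_fst.comp measurable_snd) (by fun_prop))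
      · exact ((measurable_indicator_const_iff (1:ENNReal)).mpr measurableSet_Ioo).comp
          (measurable_snd.comp measurable_snd)
  refine le_trans (lintegral_mono fun p => ?_) hG.le
  by_cases hcond : 0 < p.1 ∧ p.1 < 1 ∧ 0 < p.2.1 ∧ p.2.1 < 1 - p.1 ∧
      0 < p.2.2 ∧ p.2.2 < 1/(2 - p.1 - p.2.1)
  · obtain ⟨h1, h2, h3, h4, h5, h6⟩ := hcond
    have hQ1 : p.2.2 < 1 := by
      have hd : (1:ℝ) < 2 - p.1 - p.2.1 := by linarith
      have : 1/(2 - p.1 - p.2.1) ≤ 1 := by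
        rw [div_le_one (by linarith)]; linarith
      linarith
    rw [if_pos ⟨h1, h2, h3, h4, h5, h6⟩,
      indicator_of_mem (show p.1 ∈ Ioo (0:ℝ) 1 from ⟨h1, h2⟩),
      indicator_of_mem (show p.2.1 ∈ Ioo (0:ℝ) (1 - p.1) from ⟨h3, h4⟩),
      indicator_of_mem (show p.2.2 ∈ Ioo (0:ℝ) 1 from ⟨h5, hQ1⟩)]
    simp
  · rw [if_neg hcond]
    simp

/-- For every `h' ∈ (−1,1)`, the mean free time
`∫₀^∞ ∫_{−1}^1 s · P(s,h|h') ds dh` is finite. -/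
theorem meanFreeTime_finite (h' : ℝ) (hh' : h' ∈ Set.Ioo (-1:ℝ) 1) :
    ∫⁻ q : ℝ × ℝ, ENNReal.ofReal q.1 ∂(transitionProb h') < ⊤ := by
  have hg : Measurable fun q : ℝ × ℝ => ENNReal.ofReal q.1 :=
    measurable_fst.ennreal_ofReal
  rw [transitionProb, lintegral_map hg (meas_f h'), lorentzMu]
  rw [lintegral_prod (fun p : (ℝ × ℝ × ℝ) × Bool =>
    ENNReal.ofReal (transferMap p.1.1 p.1.2.1 p.1.2.2 p.2.toNat h').1)
    ((meas_f h').fst.ennreal_ofReal.aemeasurable)]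
  have hcount : ∀ x : ℝ × ℝ × ℝ,
      (∫⁻ b : Bool, ENNReal.ofReal
        (transferMap x.1 x.2.1 x.2.2 b.toNat h').1 ∂Measure.count)
      = ENNReal.ofReal (transferMap x.1 x.2.1 x.2.2 (false : Bool).toNat h').1
        + ENNReal.ofReal (transferMap x.1 x.2.1 x.2.2 (true : Bool).toNat h').1 := by
    intro x
    rw [lintegral_count, tsum_bool]
  simp only [hcount]
  have key : ∀ b : Bool,
      (∫⁻ x : ℝ × ℝ × ℝ, ENNReal.ofReal
        (transferMap x.1 x.2.1 x.2.2 b.toNat h').1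
        ∂((volume : Measure (ℝ × ℝ × ℝ)).withDensity fun p =>
          ENNReal.ofReal
            (if 0 < p.1 ∧ p.1 < 1 ∧ 0 < p.2.1 ∧ p.2.1 < 1 - p.1 ∧
                0 < p.2.2 ∧ p.2.2 < 1/(2 - p.1 - p.2.1) then
              (6 / Real.pi ^ 2) / (1 - p.1) else 0)))
      ≤ ENNReal.ofReal (6 / Real.pi ^ 2) * ENNReal.ofReal (1 + 2/(1 - |h'|)) := by
    intro b
    rw [lintegral_withDensity_eq_lintegral_mul _ meas_dens
      ((meas_transfer h' b.toNat).fst.ennreal_ofReal)]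
    have ptwise : ∀ x : ℝ × ℝ × ℝ,
        (ENNReal.ofReal
          (if 0 < x.1 ∧ x.1 < 1 ∧ 0 < x.2.1 ∧ x.2.1 < 1 - x.1 ∧
              0 < x.2.2 ∧ x.2.2 < 1/(2 - x.1 - x.2.1) then
            (6 / Real.pi ^ 2) / (1 - x.1) else 0))
          * ENNReal.ofReal (transferMap x.1 x.2.1 x.2.2 b.toNat h').1
        ≤ (ENNReal.ofReal
          (if 0 < x.1 ∧ x.1 < 1 ∧ 0 < x.2.1 ∧ x.2.1 < 1 - x.1 ∧
              0 < x.2.2 ∧ x.2.2 < 1/(2 - x.1 - x.2.1) then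
            (6 / Real.pi ^ 2) / (1 - x.1) else 0))
          * ENNReal.ofReal (1 + 2/(1 - |h'|)) := by
      intro x
      by_cases hcond : 0 < x.1 ∧ x.1 < 1 ∧ 0 < x.2.1 ∧ x.2.1 < 1 - x.1 ∧
          0 < x.2.2 ∧ x.2.2 < 1/(2 - x.1 - x.2.1)
      · exact mul_le_mul_right
          (ENNReal.ofReal_le_ofReal (transfer_fst_le h' hh' x.1 x.2.1 x.2.2 b hcond)) _
      · rw [if_neg hcond]
        simp
    calc (∫⁻ x : ℝ × ℝ × ℝ,
          (fun p : ℝ × ℝ × ℝ => ENNReal.ofReal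
            (if 0 < p.1 ∧ p.1 < 1 ∧ 0 < p.2.1 ∧ p.2.1 < 1 - p.1 ∧
                0 < p.2.2 ∧ p.2.2 < 1/(2 - p.1 - p.2.1) then
              (6 / Real.pi ^ 2) / (1 - p.1) else 0)) x
            * ENNReal.ofReal (transferMap x.1 x.2.1 x.2.2 b.toNat h').1)
        ≤ ∫⁻ x : ℝ × ℝ × ℝ,
          ENNReal.ofReal
            (if 0 < x.1 ∧ x.1 < 1 ∧ 0 < x.2.1 ∧ x.2.1 < 1 - x.1 ∧
                0 < x.2.2 ∧ x.2.2 < 1/(2 - x.1 - x.2.1) then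
              (6 / Real.pi ^ 2) / (1 - x.1) else 0)
            * ENNReal.ofReal (1 + 2/(1 - |h'|)) := lintegral_mono fun x => ptwise x
      _ = (∫⁻ x : ℝ × ℝ × ℝ,
          ENNReal.ofReal
            (if 0 < x.1 ∧ x.1 < 1 ∧ 0 < x.2.1 ∧ x.2.1 < 1 - x.1 ∧
                0 < x.2.2 ∧ x.2.2 < 1/(2 - x.1 - x.2.1) then
              (6 / Real.pi ^ 2) / (1 - x.1) else 0))
          * ENNReal.ofReal (1 + 2/(1 - |h'|)) := lintegral_mul_const _ meas_dens
      _ ≤ ENNReal.ofReal (6 / Real.pi ^ 2) * ENNReal.ofReal (1 + 2/(1 - |h'|)) := by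
          exact mul_le_mul_left (dens_lintegral_le _ (by positivity)) _
  have hmeas0 : Measurable fun x : ℝ × ℝ × ℝ =>
      ENNReal.ofReal (transferMap x.1 x.2.1 x.2.2 (false : Bool).toNat h').1 :=
    (meas_transfer h' _).fst.ennreal_ofReal
  rw [lintegral_add_left hmeas0]
  have hfin : ENNReal.ofReal (6 / Real.pi ^ 2) * ENNReal.ofReal (1 + 2/(1 - |h'|)) < ⊤ :=
    ENNReal.mul_lt_top ENNReal.ofReal_lt_top ENNReal.ofReal_lt_top
  exact lt_of_le_of_lt (add_le_add (key false) (key true)) (by exact lt_of_le_of_lt le_rfl (by simpa using ENNReal.add_lt_top.mpr ⟨hfin, hfin⟩))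
end
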